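/- arXiv:2005.11418 — 3 statements merged into one kernel-verified Lean document; each statement's English description precedes it below -/
import Mathlib

section
/- Consider f₁(x) = x²/2 and f₂(x) = -x²/2 on ℝ. For FedAvg with constant stepsize η > 0 and Q local gradient-descent steps followed by averaging, the 2×2 iteration matrix (1/2)·D^{Q-1}·𝟙𝟙ᵀ·D with D = diag(1-η, 1+η) has eigenvalues 0 and ((1+η)^Q + (1-η)^Q)/2, and for any Q > 1 and η > 0 the nonzero eigenvalue strictly exceeds 1. -/
/-!
`D ^ (Q - 1) * 𝟙𝟙ᵀ * D` is the rank-one matrix `u vᵀ` with `u = d ^ (Q - 1)` and `v = d`,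
where `D = diagonal d`. A rank-one matrix `u vᵀ` kills every vector orthogonal to `v` and has
`u` as eigenvector with eigenvalue `v ⬝ᵥ u = ∑ dᵢ ^ Q`. That this eigenvalue exceeds `1`
follows from `(1 + x) ^ n + (1 - x) ^ n` being nondecreasing in `n` for `x > 0`.
-/

open Matrix

namespace Matrix

variable {n α : Type*} [Fintype n]

theorem diagonal_mul_of_one_mul_diagonal [DecidableEq n] [NonAssocSemiring α] (a b : n → α) :
    diagonal a * of (fun _ _ => (1 : α)) * diagonal b = vecMulVec a b := by
  ext i j
  simp [mul_diagonal, diagonal_mul, vecMulVec_apply]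

variable [CommSemiring α]

theorem vecMulVec_mulVec_self (u v : n → α) : vecMulVec u v *ᵥ u = (v ⬝ᵥ u) • u := by
  rw [vecMulVec_mulVec, op_smul_eq_smul]

theorem vecMulVec_mulVec_eq_zero {u v w : n → α} (h : v ⬝ᵥ w = 0) : vecMulVec u v *ᵥ w = 0 := by
  rw [vecMulVec_mulVec, h, MulOpposite.op_zero, zero_smul]

theorem dotProduct_pow_pred {Q : ℕ} (hQ : Q ≠ 0) (d : n → α) :
    d ⬝ᵥ d ^ (Q - 1) = ∑ i, d i ^ Q := by
  refine Finset.sum_congr rfl fun i _ => ?_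
  rw [Pi.pow_apply, ← pow_succ', Nat.sub_add_cancel (Nat.one_le_iff_ne_zero.mpr hQ)]

end Matrix

theorem one_sub_pow_le_one_add_pow {x : ℝ} (hx : 0 ≤ x) (n : ℕ) : (1 - x) ^ n ≤ (1 + x) ^ n :=
  calc (1 - x) ^ n ≤ |1 - x| ^ n := (le_abs_self _).trans (abs_pow _ _).le
    _ ≤ (1 + x) ^ n := pow_le_pow_left₀ (abs_nonneg _) (abs_le.mpr ⟨by linarith, by linarith⟩) n

theorem two_lt_one_add_pow_add_one_sub_pow {x : ℝ} (hx : 0 < x) {n : ℕ} (hn : 2 ≤ n) :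
    2 < (1 + x) ^ n + (1 - x) ^ n := by
  induction n, hn using Nat.le_induction with
  | base => nlinarith
  | succ n _ ih =>
    -- consecutive terms differ by `x ((1 + x) ^ n - (1 - x) ^ n) ≥ 0`
    have := one_sub_pow_le_one_add_pow hx.le n
    rw [pow_succ, pow_succ]
    nlinarith

theorem stmt_6 (η : ℝ) (hη : 0 < η) (Q : ℕ) (hQ : 1 < Q)
    (D J M : Matrix (Fin 2) (Fin 2) ℝ)
    (hD : D = Matrix.diagonal ![1 - η, 1 + η])
    (hJ : J = Matrix.of fun _ _ => (1 : ℝ))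
    (hM : M = (1/2 : ℝ) • (D ^ (Q - 1) * J * D)) :
    (∃ v : Fin 2 → ℝ, v ≠ 0 ∧ M.mulVec v = (0 : ℝ) • v) ∧
    (∃ v : Fin 2 → ℝ, v ≠ 0 ∧
      M.mulVec v = (((1 + η)^Q + (1 - η)^Q) / 2) • v) ∧
    1 < ((1 + η)^Q + (1 - η)^Q) / 2 := by
  set d : Fin 2 → ℝ := ![1 - η, 1 + η]
  have hM' : M = (1 / 2 : ℝ) • vecMulVec (d ^ (Q - 1)) d := by
    rw [hM, hD, hJ, diagonal_pow, diagonal_mul_of_one_mul_diagonal]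
  refine ⟨⟨![1 + η, -(1 - η)], ?_, ?_⟩, ⟨d ^ (Q - 1), ?_, ?_⟩, ?_⟩
  · intro h
    have := congrFun h 0
    simp only [Matrix.cons_val_zero, Pi.zero_apply] at this
    linarith
  · have hdot : d ⬝ᵥ ![1 + η, -(1 - η)] = 0 := by
      simp only [d, dotProduct, Fin.sum_univ_two, Matrix.cons_val_zero, Matrix.cons_val_one]
      ring
    rw [hM', smul_mulVec, vecMulVec_mulVec_eq_zero hdot, smul_zero, zero_smul]
  · intro h
    have := congrFun h 1
    simp only [Pi.pow_apply, Pi.zero_apply, d, Matrix.cons_val_one, Matrix.cons_val_zero] at this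
    exact absurd this (by positivity)
  · rw [hM', smul_mulVec, vecMulVec_mulVec_self, smul_smul,
      dotProduct_pow_pred (by omega), Fin.sum_univ_two]
    simp only [d, Matrix.cons_val_zero, Matrix.cons_val_one]
    ring_nf
  · linarith [two_lt_one_add_pow_add_one_sub_pow hη hQ]
end

section
/- For the divergence example with diminishing stepsizes, with Q > 1, η^r = 1/√r for r ≢ 1 (mod Q) and η^{kQ+1} = 1/2, the nonzero eigenvalue λ₂ = (1/4)·∏_{r=kQ+2}^{(k+1)Q-1}(1 - 1/√r)·(1 - 1/√(kQ)) + (3/4)·∏_{r=kQ+2}^{(k+1)Q-1}(1 + 1/√r)·(1 + 1/√(kQ)) of the round map is strictly larger than 1 for every k ≥ 1. -/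
/-!
With `T = ∑ 1/√r` over the inner rounds and `s = 1/√(kQ)`, the Weierstrass product inequalities
give `∏ (1 - 1/√r) ≥ 1 - T` and `∏ (1 + 1/√r) ≥ 1 + T`, so
`λ₂ ≥ (1/4)(1 - T)(1 - s) + (3/4)(1 + T)(1 + s) = 1 + (T + s)/2 + Ts/2 > 1` as soon as `s > 0`.
-/

open Finset

section Weierstrass

variable {ι R : Type*} [CommRing R] [LinearOrder R] [IsStrictOrderedRing R]

theorem Finset.one_sub_sum_le_prod_one_sub (s : Finset ι) {f : ι → R}
    (h0 : ∀ i ∈ s, 0 ≤ f i) (h1 : ∀ i ∈ s, f i ≤ 1) :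
    1 - ∑ i ∈ s, f i ≤ ∏ i ∈ s, (1 - f i) := by
  induction s using Finset.cons_induction with
  | empty => simp
  | cons a s ha ih =>
    rw [sum_cons, prod_cons]
    have h0a := h0 a (mem_cons_self a s)
    have h1a := h1 a (mem_cons_self a s)
    have ih := ih (fun i hi ↦ h0 i (mem_cons_of_mem hi)) (fun i hi ↦ h1 i (mem_cons_of_mem hi))
    have hsum : 0 ≤ ∑ i ∈ s, f i := sum_nonneg fun i hi ↦ h0 i (mem_cons_of_mem hi)
    nlinarith [mul_le_mul_of_nonneg_left ih (sub_nonneg.2 h1a), mul_nonneg h0a hsum]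

theorem Finset.one_add_sum_le_prod_one_add (s : Finset ι) {f : ι → R}
    (h0 : ∀ i ∈ s, 0 ≤ f i) :
    1 + ∑ i ∈ s, f i ≤ ∏ i ∈ s, (1 + f i) := by
  induction s using Finset.cons_induction with
  | empty => simp
  | cons a s ha ih =>
    rw [sum_cons, prod_cons]
    have h0a := h0 a (mem_cons_self a s)
    have ih := ih fun i hi ↦ h0 i (mem_cons_of_mem hi)
    have hsum : 0 ≤ ∑ i ∈ s, f i := sum_nonneg fun i hi ↦ h0 i (mem_cons_of_mem hi)
    nlinarith

end Weierstrass

theorem one_lt_quarter_mul_add_three_quarter_mul {a c s T : ℝ} (hT : 0 ≤ T) (hs : 0 < s)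
    (hs1 : s < 1) (ha : 1 - T ≤ a) (hc : 1 + T ≤ c) :
    1 < 1 / 4 * a * (1 - s) + 3 / 4 * c * (1 + s) := by
  nlinarith [mul_le_mul_of_nonneg_right ha (sub_nonneg.2 hs1.le),
    mul_le_mul_of_nonneg_right hc (by linarith : (0 : ℝ) ≤ 1 + s), mul_nonneg hT hs.le]

theorem one_div_sqrt_natCast_le_one (n : ℕ) : 1 / √(n : ℝ) ≤ 1 := by
  rcases n.eq_zero_or_pos with rfl | hn
  · simp
  · exact div_le_one_of_le₀ (Real.one_le_sqrt.2 (by exact_mod_cast hn)) (Real.sqrt_nonneg _)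

theorem one_div_sqrt_natCast_lt_one {n : ℕ} (hn : 1 < n) : 1 / √(n : ℝ) < 1 := by
  rw [div_lt_one (by positivity)]
  exact Real.lt_sqrt_of_sq_lt (by norm_num; exact_mod_cast hn)

theorem stmt_8 (Q k : ℕ) (hQ : 1 < Q) (hk : 1 ≤ k) :
    1 < (1/4 : ℝ) *
          (∏ r ∈ Finset.Icc (k * Q + 2) ((k + 1) * Q - 1), (1 - 1 / Real.sqrt (r : ℝ))) *
          (1 - 1 / Real.sqrt ((k * Q : ℕ) : ℝ))
        + (3/4 : ℝ) *
          (∏ r ∈ Finset.Icc (k * Q + 2) ((k + 1) * Q - 1), (1 + 1 / Real.sqrt (r : ℝ))) *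
          (1 + 1 / Real.sqrt ((k * Q : ℕ) : ℝ)) := by
  have hkQ : 1 < k * Q := by nlinarith
  have hf0 (r : ℕ) : 0 ≤ 1 / √(r : ℝ) := by positivity
  exact one_lt_quarter_mul_add_three_quarter_mul (sum_nonneg fun r _ ↦ hf0 r)
    (one_div_pos.2 (Real.sqrt_pos.2 (by exact_mod_cast hkQ.trans' zero_lt_one)))
    (one_div_sqrt_natCast_lt_one hkQ)
    (one_sub_sum_le_prod_one_sub _ (fun r _ ↦ hf0 r) fun r _ ↦ one_div_sqrt_natCast_le_one r)
    (one_add_sum_le_prod_one_add _ fun r _ ↦ hf0 r)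
end

section
/- Suppose f is L-smooth (∇f is L-Lipschitz) and λ' = λ + (1/η)(x' - x₀). If the augmented Lagrangian L(x,x₀,λ) = f(x) + ⟨λ, x - x₀⟩ + (1/(2η))‖x - x₀‖² is approximately minimized in x so that ∇f(x') + λ + (1/η)(x' - x₀) = e with ‖e‖² ≤ ε₁, then L(x', x₀, λ) - L(x, x₀, λ) ≤ -((1-2Lη)/(2η))‖x' - x‖² + ε₁/(2L). -/
/-!
By the descent lemma at `x'`, `f x' - f x ≤ ⟪∇f x', x' - x⟫ + L/2 ‖x' - x‖²`. The linear and
proximal terms of the augmented Lagrangian expand exactly around `x'`, with remainder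
`-‖x' - x‖²/(2η)`, so by the inexact optimality condition all first-order terms combine into
`⟪e, x' - x⟫`, which Young's inequality bounds by `ε₁/(2L) + L/2 ‖x' - x‖²`.
-/

open Set
open scoped RealInnerProductSpace

section
variable {E : Type*} [NormedAddCommGroup E] [InnerProductSpace ℝ E]

theorem real_inner_le_norm_sq_div_add_mul_norm_sq {L : ℝ} (hL : 0 < L) (u v : E) :
    ⟪u, v⟫ ≤ ‖u‖ ^ 2 / (2 * L) + L / 2 * ‖v‖ ^ 2 := by
  calc ⟪u, v⟫ ≤ ‖u‖ * ‖v‖ := real_inner_le_norm u v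
    _ ≤ ‖u‖ ^ 2 / (2 * L) + L / 2 * ‖v‖ ^ 2 := by
      field_simp
      nlinarith [sq_nonneg (‖u‖ - L * ‖v‖)]

theorem inner_add_norm_sq_div_sub_eq (c x₀ y z : E) (η : ℝ) :
    (⟪c, y - x₀⟫ + ‖y - x₀‖ ^ 2 / (2 * η)) - (⟪c, z - x₀⟫ + ‖z - x₀‖ ^ 2 / (2 * η))
      = ⟪c + η⁻¹ • (y - x₀), y - z⟫ - ‖y - z‖ ^ 2 / (2 * η) := by
  have hz : z - x₀ = (y - x₀) - (y - z) := by abel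
  rw [hz, norm_sub_sq_real (y - x₀), inner_sub_right c (y - x₀), inner_add_left,
    real_inner_smul_left]
  ring

variable [CompleteSpace E]

theorem DifferentiableAt.hasDerivAt_comp_add_smul {f : E → ℝ} {a v : E} {t : ℝ}
    (hf : DifferentiableAt ℝ f (a + t • v)) :
    HasDerivAt (fun t : ℝ => f (a + t • v)) ⟪gradient f (a + t • v), v⟫ t := by
  have hline : HasDerivAt (fun t : ℝ => a + t • v) v t := by
    simpa using ((hasDerivAt_id t).smul_const v).const_add a
  simpa [Function.comp_def] using hf.hasGradientAt.hasFDerivAt.comp_hasDerivAt t hline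

theorem abs_sub_sub_inner_gradient_le {f : E → ℝ} {L : ℝ} (hf : Differentiable ℝ f)
    (hlip : ∀ x y : E, ‖gradient f x - gradient f y‖ ≤ L * ‖x - y‖) (a b : E) :
    |f b - f a - ⟪gradient f a, b - a⟫| ≤ L / 2 * ‖b - a‖ ^ 2 := by
  set v := b - a
  let h : ℝ → ℝ := fun t => f (a + t • v) - f a - t * ⟪gradient f a, v⟫
  have hh : ∀ t, HasDerivAt h ⟪gradient f (a + t • v) - gradient f a, v⟫ t := fun t => by
    rw [inner_sub_left]
    exact ((hf _).hasDerivAt_comp_add_smul.sub_const _).sub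
      ((hasDerivAt_id t).mul_const _ |>.congr_deriv (one_mul _))
  have hB : ∀ t, HasDerivAt (fun t : ℝ => L / 2 * t ^ 2 * ‖v‖ ^ 2) (L * t * ‖v‖ ^ 2) t :=
    fun t => (((hasDerivAt_pow 2 t).const_mul (L / 2)).mul_const (‖v‖ ^ 2)).congr_deriv (by
      push_cast; ring)
  have hbound : ∀ t ∈ Ico (0 : ℝ) 1,
      ‖⟪gradient f (a + t • v) - gradient f a, v⟫‖ ≤ L * t * ‖v‖ ^ 2 := by
    rintro t ⟨ht, -⟩
    calc ‖⟪gradient f (a + t • v) - gradient f a, v⟫‖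
        ≤ ‖gradient f (a + t • v) - gradient f a‖ * ‖v‖ := norm_inner_le_norm _ _
      _ ≤ L * ‖t • v‖ * ‖v‖ := by
          gcongr
          simpa using hlip (a + t • v) a
      _ = L * t * ‖v‖ ^ 2 := by
          rw [norm_smul, Real.norm_of_nonneg ht]; ring
  have := image_norm_le_of_norm_deriv_right_le_deriv_boundary
    (fun t _ => (hh t).continuousAt.continuousWithinAt) (fun t _ => (hh t).hasDerivWithinAt)
    (by simp [h]) hB hbound (right_mem_Icc.2 zero_le_one)
  simpa [h, v] using this

end

theorem stmt_12 {E : Type*} [NormedAddCommGroup E] [InnerProductSpace ℝ E]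
    [CompleteSpace E]
    (f : E → ℝ) (L η ε₁ : ℝ) (hL : 0 < L) (hη : 0 < η)
    (hdiff : Differentiable ℝ f)
    (hlip : ∀ x y : E, ‖gradient f x - gradient f y‖ ≤ L * ‖x - y‖)
    (x x' x₀ lam e : E)
    (hopt : gradient f x' + lam + (1/η) • (x' - x₀) = e)
    (he : ‖e‖^2 ≤ ε₁) :
    (f x' + (inner ℝ lam (x' - x₀) : ℝ) + ‖x' - x₀‖^2 / (2*η))
      - (f x + (inner ℝ lam (x - x₀) : ℝ) + ‖x - x₀‖^2 / (2*η))
      ≤ -((1 - 2*L*η) / (2*η)) * ‖x' - x‖^2 + ε₁ / (2*L) := by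
  have hdescent : f x' - f x - ⟪gradient f x', x' - x⟫ ≤ L / 2 * ‖x' - x‖ ^ 2 := by
    have := neg_le_of_abs_le (abs_sub_sub_inner_gradient_le hdiff hlip x' x)
    rw [norm_sub_rev, ← neg_sub x' x, inner_neg_right] at this
    linarith
  have hyoung : ⟪e, x' - x⟫ ≤ ε₁ / (2 * L) + L / 2 * ‖x' - x‖ ^ 2 := by
    grw [real_inner_le_norm_sq_div_add_mul_norm_sq hL, he]
  rw [one_div] at hopt
  calc _ = (f x' - f x - ⟪gradient f x', x' - x⟫) + ⟪e, x' - x⟫ - ‖x' - x‖ ^ 2 / (2 * η) := by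
        rw [← hopt, add_assoc (gradient f x'), inner_add_left]
        linear_combination inner_add_norm_sq_div_sub_eq lam x₀ x' x η
    _ ≤ L / 2 * ‖x' - x‖ ^ 2 + (ε₁ / (2 * L) + L / 2 * ‖x' - x‖ ^ 2)
          - ‖x' - x‖ ^ 2 / (2 * η) := by gcongr
    _ = _ := by field_simp; ring
end
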